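/- arXiv:1803.07239 — 2 statements merged into one kernel-verified Lean document; each statement's English description precedes it below -/
import Mathlib

section
/- Let H be a finite dimensional Hopf algebra, α, β, γ, δ Hopf automorphisms, and W = Σᵢ eᵢ ⊗ eⁱ. Then in H ⊗ (H* ⋈ H_(γ,δ)): (β⁻¹ ⊗ id)(W) · (γ ⊗ γ⁻¹βγ)Δ(h) = (β⁻¹δγ⁻¹βγ ⊗ γ⁻¹βγ)Δ^cop(h) · (β⁻¹ ⊗ id)(W) for all h ∈ H, where (β⁻¹ ⊗ id)(W) = Σᵢ β⁻¹(eᵢ) ⊗ (eⁱ ⋈ 1), (γ ⊗ γ⁻¹βγ)Δ(h) = Σ γ(h₁) ⊗ (ε ⋈ γ⁻¹βγ(h₂)), and (β⁻¹δγ⁻¹βγ ⊗ γ⁻¹βγ)Δ^cop(h) = Σ β⁻¹δγ⁻¹βγ(h₂) ⊗ (ε ⋈ γ⁻¹βγ(h₁)). -/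
open TensorProduct LinearMap

noncomputable section

namespace DCP

variable (K : Type) {H : Type} [Field K] [Ring H] [HopfAlgebra K H]

/-- A Hopf algebra automorphism: a linear equivalence that is an algebra morphism and a
coalgebra morphism. -/
def IsHopfAut (f : H ≃ₗ[K] H) : Prop :=
  (∀ x y : H, f (x * y) = f x * f y) ∧ f 1 = 1 ∧
    (Coalgebra.comul ∘ₗ f.toLinearMap
      = TensorProduct.map f.toLinearMap f.toLinearMap ∘ₗ Coalgebra.comul) ∧
    (Coalgebra.counit ∘ₗ f.toLinearMap = (Coalgebra.counit : H →ₗ[K] K))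

/-- The convolution product on the dual of `H`, as a bilinear map. -/
def convMul : Module.Dual K H →ₗ[K] Module.Dual K H →ₗ[K] Module.Dual K H :=
  (TensorProduct.mapBilinear (RingHom.id K) H H K K).compr₂
    ((LinearMap.lcomp K K (Coalgebra.comul (R := K) (A := H))) ∘ₗ
      (LinearMap.llcomp K (H ⊗[K] H) (K ⊗[K] K) K (TensorProduct.lid K K).toLinearMap))

@[simp] lemma convMul_apply (p q : Module.Dual K H) (x : H) :
    convMul K p q x = (TensorProduct.lid K K).toLinearMap
      (TensorProduct.map p q (Coalgebra.comul x)) := rfl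

/-- The coproduct on the dual of a finite-dimensional Hopf algebra, dual to multiplication. -/
def dcomul [FiniteDimensional K H] :
    Module.Dual K H →ₗ[K] Module.Dual K H ⊗[K] Module.Dual K H :=
  (TensorProduct.dualDistribEquiv K H H).symm.toLinearMap ∘ₗ (LinearMap.mul' K H).dualMap

/-- The iterated comultiplication `h ↦ h₁ ⊗ (h₂ ⊗ h₃)`. -/
def comul2 : H →ₗ[K] H ⊗[K] (H ⊗[K] H) :=
  (LinearMap.lTensor H (Coalgebra.comul (R := K))) ∘ₗ Coalgebra.comul

/-- Lift a trilinear map to the triple tensor product `H ⊗ (H ⊗ H)`. -/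
def lift3 {W : Type} [AddCommMonoid W] [Module K W]
    (Φ : H →ₗ[K] H →ₗ[K] H →ₗ[K] W) : H ⊗[K] (H ⊗[K] H) →ₗ[K] W :=
  TensorProduct.lift ((TensorProduct.lift.equiv (RingHom.id K) H H W).toLinearMap ∘ₗ Φ)

variable {K}

/-- auxiliary linear map `h₃ ↦ F (p ∘ mulLeft (u h₃) ∘ mulRight (v h₁)) ⊗ g h₂`. -/
def inner3 (u : H →ₗ[K] H) (F : Module.Dual K H →ₗ[K] Module.Dual K H)
    (p : Module.Dual K H) (a g2 : H) : H →ₗ[K] Module.Dual K H ⊗[K] H :=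
  ((TensorProduct.mk K (Module.Dual K H) H).flip g2) ∘ₗ F ∘ₗ
    (LinearMap.llcomp K H H K p) ∘ₗ
    ((LinearMap.llcomp K H H H).flip (LinearMap.mulRight K a)) ∘ₗ
    ((LinearMap.mul K H) ∘ₗ u)

@[simp] lemma inner3_apply (u : H →ₗ[K] H) (F : Module.Dual K H →ₗ[K] Module.Dual K H)
    (p : Module.Dual K H) (a g2 h₃ : H) :
    inner3 u F p a g2 h₃
      = F (p ∘ₗ LinearMap.mulLeft K (u h₃) ∘ₗ LinearMap.mulRight K a) ⊗ₜ[K] g2 := by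
  rfl

variable (K)

/-- The curried trilinear map
`(h₁, h₂, h₃) ↦ F (p ∘ mulLeft (u h₃) ∘ mulRight (v h₁)) ⊗ g h₂`. -/
def coreTri (u v : H →ₗ[K] H) (F : Module.Dual K H →ₗ[K] Module.Dual K H)
    (g : H →ₗ[K] H) (p : Module.Dual K H) :
    H →ₗ[K] H →ₗ[K] H →ₗ[K] Module.Dual K H ⊗[K] H :=
  LinearMap.mk₂ K (fun h₁ h₂ => inner3 u F p (v h₁) (g h₂))
    (fun m m' n => by
      have hR : ∀ a b : H, LinearMap.mulRight K (a + b)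
          = LinearMap.mulRight K a + LinearMap.mulRight K b := by
        intro a b; ext x; simp [mul_add]
      ext h₃
      simp [hR, LinearMap.comp_add, LinearMap.add_comp, map_add, add_tmul])
    (fun c m n => by
      have hR : ∀ a : H, LinearMap.mulRight K ((c : K) • a)
          = c • LinearMap.mulRight K a := by
        intro a; ext x; simp [mul_smul_comm]
      ext h₃
      simp [hR, LinearMap.comp_smul, LinearMap.smul_comp, map_smul, smul_tmul'])
    (fun m n n' => by
      ext h₃
      simp [map_add, tmul_add])
    (fun c m n => by
      ext h₃
      simp [map_smul, tmul_smul])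

/-- The diagonal crossed product of pure tensors:
`(p ⋈ h)(q ⋈ l) = Σ p (α(h₁) ▶ q ◀ S⁻¹β(h₃)) ⋈ h₂ l`. -/
def dprod (α β Sinv : H →ₗ[K] H) (p : Module.Dual K H) (h : H)
    (q : Module.Dual K H) (l : H) : Module.Dual K H ⊗[K] H :=
  lift3 K (coreTri K (Sinv ∘ₗ β) α (convMul K p) (LinearMap.mulRight K l) q) (comul2 K h)

/-- The value of the antipode of the diagonal crossed product on a pure tensor. -/
def smapVal (α β Sinv : H →ₗ[K] H) (p : Module.Dual K H) (h : H) :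
    Module.Dual K H ⊗[K] H :=
  lift3 K (coreTri K (Sinv ∘ₗ β ∘ₗ HopfAlgebra.antipode (R := K))
      (Sinv ∘ₗ α) Sinv.dualMap
      (α ∘ₗ β ∘ₗ HopfAlgebra.antipode (R := K)) p) (comul2 K h)

/-- Componentwise product on a tensor product of two (nonunital) algebras given by
bilinear multiplications. -/
def tmul₂ {A B : Type} [AddCommMonoid A] [Module K A] [AddCommMonoid B] [Module K B]
    (M1 : A →ₗ[K] A →ₗ[K] A) (M2 : B →ₗ[K] B →ₗ[K] B) :
    A ⊗[K] B →ₗ[K] A ⊗[K] B →ₗ[K] A ⊗[K] B :=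
  (TensorProduct.homTensorHomMap (RingHom.id K) A B A B) ∘ₗ (TensorProduct.map M1 M2)

/-- The comultiplication component `Δ_{(α,β),(γ,δ)}(p ⋈ h) = Σ (p₂ ⋈ c h₁) ⊗ (p₁ ⋈ e h₂)`
(with `c = γ`, `e = γ⁻¹βγ`). -/
def deltaComp [FiniteDimensional K H] (c e : H →ₗ[K] H) :
    Module.Dual K H ⊗[K] H →ₗ[K]
      (Module.Dual K H ⊗[K] H) ⊗[K] (Module.Dual K H ⊗[K] H) :=
  (TensorProduct.tensorTensorTensorComm K (Module.Dual K H) (Module.Dual K H) H H).toLinearMap ∘ₗ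
    TensorProduct.map
      ((TensorProduct.comm K (Module.Dual K H) (Module.Dual K H)).toLinearMap ∘ₗ dcomul K)
      (TensorProduct.map c e ∘ₗ Coalgebra.comul)

/-- The crossing map `ξ_(a,b)^(c,·)(p ⋈ h) = (p ∘ b a⁻¹) ⋈ a c⁻¹ b⁻¹ c (h)`. -/
def xiMap (a b c : H ≃ₗ[K] H) :
    Module.Dual K H ⊗[K] H →ₗ[K] Module.Dual K H ⊗[K] H :=
  TensorProduct.map ((b.toLinearMap ∘ₗ a.symm.toLinearMap).dualMap)
    (a.toLinearMap ∘ₗ c.symm.toLinearMap ∘ₗ b.symm.toLinearMap ∘ₗ c.toLinearMap)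

/-- Embedding of the dual into the crossed product, `p ↦ p ⋈ 1`. -/
def toD1 : Module.Dual K H →ₗ[K] Module.Dual K H ⊗[K] H :=
  (TensorProduct.mk K (Module.Dual K H) H).flip 1

/-- Embedding of `H` into the crossed product, `h ↦ ε ⋈ h`. -/
def toD2 : H →ₗ[K] Module.Dual K H ⊗[K] H :=
  TensorProduct.mk K (Module.Dual K H) H (Coalgebra.counit (R := K))

end DCP

/-!
Write `e = γ⁻¹βγ`. Since `(q ⋈ 1)(ε ⋈ l) = q ⋈ l`, the left side is `∑ β⁻¹(eᵢ)γ(h₁) ⊗ (eⁱ ⋈ e h₂)`.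
On the right, `(ε ⋈ e x)(eⁱ ⋈ 1) = ∑ eⁱ(S⁻¹δe(x₃) · _ · βγ(x₁)) ⋈ e x₂`, and the canonical
element is invariant, `∑ eᵢ ⊗ eⁱ ∘ g = ∑ g(eᵢ) ⊗ eⁱ`, so the multiplications move from the dual
basis onto the basis: the right side becomes `∑ β⁻¹(δe(h₄) S⁻¹(δe(h₃)) eᵢ βγ(h₁)) ⊗ (eⁱ ⋈ e h₂)`.
As `∑ y₂ S⁻¹(y₁) = ε(y)` and `δe` is a coalgebra map, coassociativity collapses the factor
`δe(h₄) S⁻¹(δe(h₃))` to `ε(h₃)`, which leaves the left side.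
-/

open Coalgebra (comul counit)
open HopfAlgebra (antipode)

lemma Module.Basis.sum_tmul_coord_comp {K V ι : Type} [CommRing K] [AddCommGroup V]
    [Module K V] [Fintype ι] (b : Module.Basis ι K V) (g : V →ₗ[K] V) :
    ∑ i, b i ⊗ₜ[K] (b.coord i ∘ₗ g) = ∑ i, g (b i) ⊗ₜ[K] b.coord i := by
  have := Module.Finite.of_basis b
  have := Module.Free.of_basis b
  apply (TensorProduct.comm K _ _).symm.injective
  apply (dualTensorHomEquiv K V V).injective
  ext x
  simp only [dualTensorHomEquiv, TensorProduct.comm_symm, map_sum, TensorProduct.comm_tmul,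
    LinearEquiv.ofBijective_apply, LinearMap.coe_sum, Finset.sum_apply, dualTensorHom_apply,
    LinearMap.coe_comp, Function.comp_apply, Module.Basis.coord_apply, b.sum_repr]
  simp only [← map_smul, ← map_sum, b.sum_repr]

-- In Sweedler notation: `∑ (a₁ ⊗ a₂) ⊗ m (a₃ ⊗ a₄) = ∑ (a₁ ⊗ a₂) ⊗ 1`.
lemma lTensor_comp_assoc_comp_rTensor_comp_comul {K A B : Type} [CommSemiring K]
    [AddCommMonoid A] [Module K A] [Coalgebra K A] [Semiring B] [Algebra K B]
    {m : A ⊗[K] A →ₗ[K] B}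
    (hm : m ∘ₗ comul = Algebra.linearMap K B ∘ₗ counit) :
    m.lTensor (A ⊗[K] A) ∘ₗ (TensorProduct.assoc K (A ⊗[K] A) A A).toLinearMap ∘ₗ
        ((TensorProduct.assoc K A A A).symm.toLinearMap ∘ₗ comul.lTensor A ∘ₗ comul).rTensor A ∘ₗ
        comul
      = (TensorProduct.mk K (A ⊗[K] A) B).flip 1 ∘ₗ comul (R := K) := by
  have hcoassoc : (TensorProduct.assoc K (A ⊗[K] A) A A).toLinearMap ∘ₗ
        ((TensorProduct.assoc K A A A).symm.toLinearMap ∘ₗ comul.lTensor A ∘ₗ comul).rTensor A ∘ₗ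
        comul
      = TensorProduct.map (comul (R := K) (A := A)) comul ∘ₗ comul := by
    simp only [coassoc_simps]
  rw [hcoassoc, ← LinearMap.comp_assoc, LinearMap.lTensor_comp_map, hm,
    ← LinearMap.map_comp_lTensor, LinearMap.comp_assoc, Coalgebra.lTensor_counit_comp_comul]
  ext x
  simp

namespace DCP

variable {K H : Type} [Field K] [Ring H] [HopfAlgebra K H]

namespace IsHopfAut

variable {f g : H ≃ₗ[K] H}

lemma map_mul (hf : IsHopfAut K f) (x y : H) : f (x * y) = f x * f y := hf.1 x y

lemma map_one (hf : IsHopfAut K f) : f 1 = 1 := hf.2.1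

lemma comul_comp (hf : IsHopfAut K f) :
    comul ∘ₗ f.toLinearMap = TensorProduct.map f.toLinearMap f.toLinearMap ∘ₗ comul (R := K) :=
  hf.2.2.1

lemma counit_comp (hf : IsHopfAut K f) : counit ∘ₗ f.toLinearMap = counit (R := K) :=
  hf.2.2.2

lemma comul_apply (hf : IsHopfAut K f) (x : H) :
    comul (f x) = TensorProduct.map f.toLinearMap f.toLinearMap (comul (R := K) x) :=
  LinearMap.congr_fun hf.comul_comp x

lemma counit_apply (hf : IsHopfAut K f) (x : H) : counit (R := K) (f x) = counit x :=
  LinearMap.congr_fun hf.counit_comp x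

lemma comul2_apply (hf : IsHopfAut K f) (x : H) :
    comul2 K (f x)
      = TensorProduct.map f.toLinearMap (TensorProduct.map f.toLinearMap f.toLinearMap)
          (comul2 K x) := by
  have h : comul2 K ∘ₗ f.toLinearMap
      = TensorProduct.map f.toLinearMap (TensorProduct.map f.toLinearMap f.toLinearMap) ∘ₗ
          comul2 K := by
    simp only [comul2, LinearMap.comp_assoc, hf.comul_comp]
    simp only [← LinearMap.comp_assoc, LinearMap.lTensor_comp_map, LinearMap.map_comp_lTensor,
      hf.comul_comp]
  exact LinearMap.congr_fun h x

lemma symm (hf : IsHopfAut K f) : IsHopfAut K f.symm := by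
  refine ⟨fun x y => f.injective ?_, f.injective ?_, ?_, ?_⟩
  · simp [hf.map_mul]
  · simp [hf.map_one]
  · ext x
    apply (TensorProduct.congr f f).injective
    simp [TensorProduct.congr, ← hf.comul_apply, TensorProduct.map_map]
  · ext x
    simpa using (hf.counit_apply (f.symm x)).symm

lemma trans (hf : IsHopfAut K f) (hg : IsHopfAut K g) : IsHopfAut K (f.trans g) := by
  refine ⟨fun x y => by simp [hf.map_mul, hg.map_mul], by simp [hf.map_one, hg.map_one], ?_, ?_⟩
  · ext x
    simp [hf.comul_apply, hg.comul_apply, TensorProduct.map_map]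
  · ext x
    simp [hf.counit_apply, hg.counit_apply]

end IsHopfAut

section InverseAntipode

variable {Sinv : H →ₗ[K] H}

lemma sinv_antipode (hS1 : Sinv ∘ₗ antipode K = LinearMap.id) (x : H) :
    Sinv (antipode K x) = x :=
  LinearMap.congr_fun hS1 x

lemma antipode_sinv (hS2 : antipode K ∘ₗ Sinv = LinearMap.id) (x : H) :
    antipode K (Sinv x) = x :=
  LinearMap.congr_fun hS2 x

lemma sinv_one (hS1 : Sinv ∘ₗ antipode K = LinearMap.id) : Sinv (1 : H) = 1 := by
  simpa using sinv_antipode hS1 1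

lemma mul'_comp_comm_comp_rTensor_comp_comul (hS1 : Sinv ∘ₗ antipode K = LinearMap.id)
    (hS2 : antipode K ∘ₗ Sinv = LinearMap.id) :
    LinearMap.mul' K H ∘ₗ (TensorProduct.comm K H H).toLinearMap ∘ₗ Sinv.rTensor H ∘ₗ comul
      = Algebra.linearMap K H ∘ₗ counit := by
  -- `S` is injective and anti-multiplicative, and turns this into the axiom `∑ y₁ S(y₂) = ε(y)`.
  have hS : antipode K ∘ₗ LinearMap.mul' K H ∘ₗ (TensorProduct.comm K H H).toLinearMap ∘ₗ
      Sinv.rTensor H = LinearMap.mul' K H ∘ₗ (antipode K).lTensor H := by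
    ext x y
    simp [HopfAlgebra.antipode_mul_antidistrib, antipode_sinv hS2]
  ext x
  apply (Function.LeftInverse.injective (sinv_antipode hS1) : Function.Injective (antipode K))
  simpa [Algebra.algebraMap_eq_smul_one] using LinearMap.congr_fun hS (comul x)

variable (Sinv) in
def swapMulSinv (d : H ≃ₗ[K] H) : H ⊗[K] H →ₗ[K] H :=
  LinearMap.mul' K H ∘ₗ (TensorProduct.comm K H H).toLinearMap ∘ₗ
    TensorProduct.map (Sinv ∘ₗ d.toLinearMap) d.toLinearMap

@[simp] lemma swapMulSinv_tmul (d : H ≃ₗ[K] H) (x y : H) :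
    swapMulSinv Sinv d (x ⊗ₜ y) = d y * Sinv (d x) :=
  rfl

lemma swapMulSinv_comp_comul (hS1 : Sinv ∘ₗ antipode K = LinearMap.id)
    (hS2 : antipode K ∘ₗ Sinv = LinearMap.id) {d : H ≃ₗ[K] H} (hd : IsHopfAut K d) :
    swapMulSinv Sinv d ∘ₗ comul = Algebra.linearMap K H ∘ₗ counit := by
  have h := congr($(mul'_comp_comm_comp_rTensor_comp_comul hS1 hS2) ∘ₗ d.toLinearMap)
  simp only [LinearMap.comp_assoc] at h
  rw [swapMulSinv, ← LinearMap.rTensor_comp_map, LinearMap.comp_assoc, LinearMap.comp_assoc,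
    LinearMap.comp_assoc, ← hd.comul_comp, h, hd.counit_comp]

end InverseAntipode

@[simp] lemma convMul_counit_right (p : Module.Dual K H) : convMul K p counit = p := by
  ext x
  rw [convMul_apply, ← LinearMap.rTensor_comp_lTensor, LinearMap.comp_apply,
    Coalgebra.lTensor_counit_comul]
  simp

@[simp] lemma convMul_counit_left (p : Module.Dual K H) : convMul K counit p = p := by
  ext x
  rw [convMul_apply, ← LinearMap.lTensor_comp_rTensor, LinearMap.comp_apply,
    Coalgebra.rTensor_counit_comul]
  simp

@[simp] lemma tmul₂_tmul {A B : Type} [AddCommMonoid A] [Module K A] [AddCommMonoid B]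
    [Module K B] (M₁ : A →ₗ[K] A →ₗ[K] A) (M₂ : B →ₗ[K] B →ₗ[K] B) (a a' : A) (c c' : B) :
    tmul₂ K M₁ M₂ (a ⊗ₜ c) (a' ⊗ₜ c') = M₁ a a' ⊗ₜ M₂ c c' := by
  simp [tmul₂]

@[simp] lemma lift3_tmul {W : Type} [AddCommMonoid W] [Module K W]
    (Φ : H →ₗ[K] H →ₗ[K] H →ₗ[K] W) (x y z : H) :
    lift3 K Φ (x ⊗ₜ (y ⊗ₜ z)) = Φ x y z := by
  simp [lift3]

@[simp] lemma coreTri_apply (u v g : H →ₗ[K] H) (F : Module.Dual K H →ₗ[K] Module.Dual K H)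
    (p : Module.Dual K H) (x y z : H) :
    coreTri K u v F g p x y z
      = F (p ∘ₗ LinearMap.mulLeft K (u z) ∘ₗ LinearMap.mulRight K (v x)) ⊗ₜ g y :=
  rfl

section CrossedProduct

variable {α β Sinv : H →ₗ[K] H}

lemma dprod_one (hα : α 1 = 1) (hβ : Sinv (β 1) = 1) (p q : Module.Dual K H) (l : H) :
    dprod K α β Sinv p 1 q l = convMul K p q ⊗ₜ l := by
  simp [dprod, comul2, Algebra.TensorProduct.one_def, hα, hβ]

lemma dprod_counit_one (p : Module.Dual K H) (h : H) :
    dprod K α β Sinv counit h p 1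
      = lift3 K (coreTri K (Sinv ∘ₗ β) α LinearMap.id LinearMap.id p) (comul2 K h) := by
  rw [dprod, show convMul K counit = LinearMap.id from LinearMap.ext convMul_counit_left,
    LinearMap.mulRight_one]

end CrossedProduct

section Sandwich

variable {ι : Type} [Fintype ι] (b : Module.Basis ι K H)

-- For `f = β⁻¹` and `g = βγ` this is `(x ⊗ y) ⊗ w ↦ (β⁻¹ w ⊗ 1) · W · (γ x ⊗ (ε ⋈ k y))`.
def sandwichW (f g k : H →ₗ[K] H) :
    (H ⊗[K] H) ⊗[K] H →ₗ[K] H ⊗[K] (Module.Dual K H ⊗[K] H) :=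
  ∑ i, TensorProduct.map
      (f ∘ₗ LinearMap.mul' K H ∘ₗ TensorProduct.map (LinearMap.mulRight K (b i)) g ∘ₗ
        (TensorProduct.comm K H H).toLinearMap)
      (TensorProduct.mk K (Module.Dual K H) H (b.coord i) ∘ₗ k) ∘ₗ
    (TensorProduct.rightComm K H H H).toLinearMap

@[simp] lemma sandwichW_tmul (f g k : H →ₗ[K] H) (x y w : H) :
    sandwichW b f g k ((x ⊗ₜ y) ⊗ₜ w) = ∑ i, f (w * b i * g x) ⊗ₜ (b.coord i ⊗ₜ k y) := by
  simp [sandwichW]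

variable {Sinv : H →ₗ[K] H} {β γ δ e : H ≃ₗ[K] H}
  {M : Module.Dual K H ⊗[K] H →ₗ[K] Module.Dual K H ⊗[K] H →ₗ[K] Module.Dual K H ⊗[K] H}

lemma tmul₂_W_comp_map_eq_sandwichW (hβ : IsHopfAut K β) (hγ : IsHopfAut K γ)
    (hδ : IsHopfAut K δ) (hS : Sinv 1 = 1)
    (hM : ∀ p h q l, M (p ⊗ₜ h) (q ⊗ₜ l) = dprod K γ.toLinearMap δ.toLinearMap Sinv p h q l) :
    tmul₂ K (LinearMap.mul K H) M (∑ i, β.symm (b i) ⊗ₜ[K] (b.coord i ⊗ₜ[K] (1 : H))) ∘ₗ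
        TensorProduct.map γ.toLinearMap (toD2 K ∘ₗ e.toLinearMap)
      = sandwichW b β.symm.toLinearMap (β.toLinearMap ∘ₗ γ.toLinearMap) e.toLinearMap ∘ₗ
          (TensorProduct.mk K (H ⊗[K] H) H).flip 1 := by
  have hM1 (q : Module.Dual K H) (l : H) : M (q ⊗ₜ 1) (counit ⊗ₜ l) = q ⊗ₜ l := by
    rw [hM, dprod_one hγ.map_one (by simp [hδ.map_one, hS]), convMul_counit_right]
  ext x y
  simp [toD2, hM1, hβ.symm.map_mul]

-- In Sweedler notation the right side is `x ⊗ y ↦ ∑ sandwichW ((x₁ ⊗ x₂) ⊗ δe(y) S⁻¹(δe(x₃)))`.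
lemma flip_tmul₂_W_comp_map_eq_sandwichW (hβ : IsHopfAut K β) (he : IsHopfAut K e)
    (hγe : ∀ x, γ (e x) = β (γ x))
    (hM : ∀ p h q l, M (p ⊗ₜ h) (q ⊗ₜ l) = dprod K γ.toLinearMap δ.toLinearMap Sinv p h q l) :
    (tmul₂ K (LinearMap.mul K H) M).flip
          (∑ i, β.symm (b i) ⊗ₜ[K] (b.coord i ⊗ₜ[K] (1 : H))) ∘ₗ
        TensorProduct.map (β.symm.toLinearMap ∘ₗ δ.toLinearMap ∘ₗ e.toLinearMap)
          (toD2 K ∘ₗ e.toLinearMap) ∘ₗ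
        (TensorProduct.comm K H H).toLinearMap
      = sandwichW b β.symm.toLinearMap (β.toLinearMap ∘ₗ γ.toLinearMap) e.toLinearMap ∘ₗ
          (swapMulSinv Sinv (e.trans δ)).lTensor (H ⊗[K] H) ∘ₗ
          (TensorProduct.assoc K (H ⊗[K] H) H H).toLinearMap ∘ₗ
          ((TensorProduct.assoc K H H H).symm.toLinearMap ∘ₗ comul2 K).rTensor H := by
  have key (y : H) : ∑ i, (TensorProduct.mk K H _ (β.symm (δ (e y)) * β.symm (b i))) ∘ₗ
        lift3 K (coreTri K (Sinv ∘ₗ δ.toLinearMap) γ.toLinearMap LinearMap.id LinearMap.id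
          (b.coord i)) ∘ₗ
        TensorProduct.map e.toLinearMap (TensorProduct.map e.toLinearMap e.toLinearMap)
      = sandwichW b β.symm.toLinearMap (β.toLinearMap ∘ₗ γ.toLinearMap) e.toLinearMap ∘ₗ
          (swapMulSinv Sinv (e.trans δ)).lTensor (H ⊗[K] H) ∘ₗ
          (TensorProduct.assoc K (H ⊗[K] H) H H).toLinearMap ∘ₗ
          (TensorProduct.mk K _ H).flip y ∘ₗ (TensorProduct.assoc K H H H).symm.toLinearMap := by
    ext a b' c
    have hswap := congr(TensorProduct.map
      (LinearMap.mulLeft K (β.symm (δ (e y))) ∘ₗ β.symm.toLinearMap)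
      ((TensorProduct.mk K _ H).flip (e b'))
      $(b.sum_tmul_coord_comp
        (LinearMap.mulLeft K (Sinv (δ (e c))) ∘ₗ LinearMap.mulRight K (β (γ a)))))
    simpa [map_sum, hγe, hβ.symm.map_mul, mul_assoc] using hswap
  ext x y
  simpa [toD2, hM, dprod_counit_one, he.comul2_apply] using LinearMap.congr_fun (key y) (comul2 K x)

end Sandwich

end DCP

theorem stmt13_general (K H : Type) [Field K] [Ring H] [HopfAlgebra K H]
    (Sinv : H →ₗ[K] H)
    (hS1 : Sinv ∘ₗ HopfAlgebra.antipode (R := K) (A := H) = LinearMap.id)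
    (hS2 : HopfAlgebra.antipode (R := K) (A := H) ∘ₗ Sinv = LinearMap.id)
    (β γ δ : H ≃ₗ[K] H)
    (hβ : DCP.IsHopfAut K β)
    (hγ : DCP.IsHopfAut K γ)
    (hδ : DCP.IsHopfAut K δ)
    (M : Module.Dual K H ⊗[K] H →ₗ[K] Module.Dual K H ⊗[K] H →ₗ[K] Module.Dual K H ⊗[K] H)
    (hM : ∀ (p : Module.Dual K H) (h : H) (q : Module.Dual K H) (l : H),
      M (p ⊗ₜ[K] h) (q ⊗ₜ[K] l) = DCP.dprod K (γ.toLinearMap) (δ.toLinearMap) Sinv p h q l)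
    (ι : Type) [Fintype ι] (b : Module.Basis ι K H) :
    ∀ h : H,
      DCP.tmul₂ K (LinearMap.mul K H) M
        (∑ i, β.symm (b i) ⊗ₜ[K] (b.coord i ⊗ₜ[K] (1 : H)))
        (TensorProduct.map γ.toLinearMap
          (DCP.toD2 K ∘ₗ γ.symm.toLinearMap ∘ₗ β.toLinearMap ∘ₗ γ.toLinearMap)
          (Coalgebra.comul h))
      = DCP.tmul₂ K (LinearMap.mul K H) M
          (TensorProduct.map
            (β.symm.toLinearMap ∘ₗ δ.toLinearMap ∘ₗ γ.symm.toLinearMap ∘ₗ β.toLinearMap ∘ₗ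
              γ.toLinearMap)
            (DCP.toD2 K ∘ₗ γ.symm.toLinearMap ∘ₗ β.toLinearMap ∘ₗ γ.toLinearMap)
            ((TensorProduct.comm K H H) (Coalgebra.comul h)))
          (∑ i, β.symm (b i) ⊗ₜ[K] (b.coord i ⊗ₜ[K] (1 : H))) := by
  intro h
  set e := γ.trans (β.trans γ.symm)
  have he : DCP.IsHopfAut K e := hγ.trans (hβ.trans hγ.symm)
  have hγe (x : H) : γ (e x) = β (γ x) := by simp [e]
  calc _ = (DCP.sandwichW b β.symm.toLinearMap (β.toLinearMap ∘ₗ γ.toLinearMap) e.toLinearMap ∘ₗ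
          (TensorProduct.mk K (H ⊗[K] H) H).flip 1 ∘ₗ comul) h :=
        LinearMap.congr_fun
          (DCP.tmul₂_W_comp_map_eq_sandwichW b hβ hγ hδ (DCP.sinv_one hS1) hM) (comul h)
    _ = _ := by
      rw [← lTensor_comp_assoc_comp_rTensor_comp_comul
        (DCP.swapMulSinv_comp_comul hS1 hS2 (he.trans hδ))]
      exact (LinearMap.congr_fun
        (DCP.flip_tmul₂_W_comp_map_eq_sandwichW b hβ he hγe hM) (comul h)).symm

/-- In `H ⊗ (H* ⋈ H_(γ,δ))`:
`(β⁻¹ ⊗ id)(W) (γ ⊗ γ⁻¹βγ)Δ(h) = (β⁻¹δγ⁻¹βγ ⊗ γ⁻¹βγ)Δ^cop(h) (β⁻¹ ⊗ id)(W)`. -/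
theorem stmt13 (K H : Type) [Field K] [Ring H] [HopfAlgebra K H] [FiniteDimensional K H]
    (Sinv : H →ₗ[K] H)
    (hS1 : Sinv ∘ₗ HopfAlgebra.antipode (R := K) (A := H) = LinearMap.id)
    (hS2 : HopfAlgebra.antipode (R := K) (A := H) ∘ₗ Sinv = LinearMap.id)
    (α β γ δ : H ≃ₗ[K] H)
    (hα : DCP.IsHopfAut K α)
    (hβ : DCP.IsHopfAut K β)
    (hγ : DCP.IsHopfAut K γ)
    (hδ : DCP.IsHopfAut K δ)
    (M : Module.Dual K H ⊗[K] H →ₗ[K] Module.Dual K H ⊗[K] H →ₗ[K] Module.Dual K H ⊗[K] H)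
    (hM : ∀ (p : Module.Dual K H) (h : H) (q : Module.Dual K H) (l : H),
      M (p ⊗ₜ[K] h) (q ⊗ₜ[K] l) = DCP.dprod K (γ.toLinearMap) (δ.toLinearMap) Sinv p h q l)
    (ι : Type) [Fintype ι] [DecidableEq ι] (b : Module.Basis ι K H) :
    ∀ h : H,
      DCP.tmul₂ K (LinearMap.mul K H) M
        (∑ i, β.symm (b i) ⊗ₜ[K] (b.coord i ⊗ₜ[K] (1 : H)))
        (TensorProduct.map γ.toLinearMap
          (DCP.toD2 K ∘ₗ γ.symm.toLinearMap ∘ₗ β.toLinearMap ∘ₗ γ.toLinearMap)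
          (Coalgebra.comul h))
      = DCP.tmul₂ K (LinearMap.mul K H) M
          (TensorProduct.map
            (β.symm.toLinearMap ∘ₗ δ.toLinearMap ∘ₗ γ.symm.toLinearMap ∘ₗ β.toLinearMap ∘ₗ
              γ.toLinearMap)
            (DCP.toD2 K ∘ₗ γ.symm.toLinearMap ∘ₗ β.toLinearMap ∘ₗ γ.toLinearMap)
            ((TensorProduct.comm K H H) (Coalgebra.comul h)))
          (∑ i, β.symm (b i) ⊗ₜ[K] (b.coord i ⊗ₜ[K] (1 : H))) :=
  stmt13_general K H Sinv hS1 hS2 β γ δ hβ hγ hδ M hM ι b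
end
end

section
/- Let H be a group and let the diagonal crossed product K(H) ⋈ KH_(α,β) have multiplication (δ_p ⋈ g)(δ_q ⋈ h) = δ_p δ_{βgβ⁻¹ q αg⁻¹α⁻¹} ⋈ gh, for conjugation automorphisms α, β ∈ H. Then the map S_(α,β)(δ_p ⋈ h) = δ_{αh⁻¹α⁻¹ p⁻¹ βhβ⁻¹} ⋈ αβh⁻¹β⁻¹α⁻¹, from K(H) ⋈ KH_(α,β) to K(H) ⋈ KH_{(α⁻¹, αβ⁻¹α⁻¹)}, is an algebra anti-homomorphism. -/
/-!
Both sides are biadditive in `(x, y)`, so it suffices to compare them on basis vectors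
`δ_p ⋈ g` and `δ_q ⋈ h`, where each side is a single basis vector or zero. After cancelling the
outer factors `αh⁻¹α⁻¹` and `βhβ⁻¹`, the condition for the right-hand product to be nonzero
becomes `q⁻¹ = αg⁻¹α⁻¹ p⁻¹ βgβ⁻¹`, the inverse of the condition `p = βgβ⁻¹ q αg⁻¹α⁻¹` on the
left; when it holds, the two basis vectors coincide by a direct computation in `H`.
-/

-- A basis vector `δ_p ⋈ g` is encoded as `Finsupp.single (p, g) 1`.
noncomputable def dp {K H : Type} [Field K] [Group H] [DecidableEq H] (α β : H)
    (x y : (H × H) →₀ K) : (H × H) →₀ K :=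
  x.sum fun pg c => y.sum fun qh d =>
    if pg.1 = β * pg.2 * β⁻¹ * qh.1 * α * pg.2⁻¹ * α⁻¹ then
      Finsupp.single (pg.1, pg.2 * qh.2) (c * d)
    else 0

noncomputable def sm {K H : Type} [Field K] [Group H] [DecidableEq H] (α β : H)
    (x : (H × H) →₀ K) : (H × H) →₀ K :=
  x.sum fun ph c =>
    Finsupp.single (α * ph.2⁻¹ * α⁻¹ * ph.1⁻¹ * β * ph.2 * β⁻¹,
      α * β * ph.2⁻¹ * β⁻¹ * α⁻¹) c

theorem sm_condition_iff {H : Type} [Group H] (α β p g q h : H) :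
    α * h⁻¹ * α⁻¹ * q⁻¹ * β * h * β⁻¹ =
        (α * β⁻¹ * α⁻¹) * (α * β * h⁻¹ * β⁻¹ * α⁻¹) * (α * β⁻¹ * α⁻¹)⁻¹ *
          (α * g⁻¹ * α⁻¹ * p⁻¹ * β * g * β⁻¹) * α⁻¹ * (α * β * h⁻¹ * β⁻¹ * α⁻¹)⁻¹ * α⁻¹⁻¹ ↔
      p = β * g * β⁻¹ * q * α * g⁻¹ * α⁻¹ := by
  rw [show α * h⁻¹ * α⁻¹ * q⁻¹ * β * h * β⁻¹ = α * h⁻¹ * α⁻¹ * q⁻¹ * (β * h * β⁻¹) by group,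
    show (α * β⁻¹ * α⁻¹) * (α * β * h⁻¹ * β⁻¹ * α⁻¹) * (α * β⁻¹ * α⁻¹)⁻¹ *
          (α * g⁻¹ * α⁻¹ * p⁻¹ * β * g * β⁻¹) * α⁻¹ * (α * β * h⁻¹ * β⁻¹ * α⁻¹)⁻¹ * α⁻¹⁻¹ =
        α * h⁻¹ * α⁻¹ * (α * g⁻¹ * α⁻¹ * p⁻¹ * β * g * β⁻¹) * (β * h * β⁻¹) by group,
    mul_left_inj, mul_right_inj, inv_eq_iff_eq_inv]
  constructor <;> intro hq <;> rw [hq] <;> group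

section

variable {K H : Type} [Field K] [Group H] [DecidableEq H]

theorem sm_eq_mapDomain (α β : H) (x : (H × H) →₀ K) :
    sm α β x = x.mapDomain fun ph =>
      (α * ph.2⁻¹ * α⁻¹ * ph.1⁻¹ * β * ph.2 * β⁻¹, α * β * ph.2⁻¹ * β⁻¹ * α⁻¹) :=
  rfl

theorem sm_zero (α β : H) : sm α β (0 : (H × H) →₀ K) = 0 := by
  simp only [sm_eq_mapDomain, Finsupp.mapDomain_zero]

theorem sm_add (α β : H) (x y : (H × H) →₀ K) : sm α β (x + y) = sm α β x + sm α β y := by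
  simp only [sm_eq_mapDomain, Finsupp.mapDomain_add]

theorem sm_single (α β p h : H) (c : K) :
    sm α β (Finsupp.single (p, h) c) =
      Finsupp.single (α * h⁻¹ * α⁻¹ * p⁻¹ * β * h * β⁻¹, α * β * h⁻¹ * β⁻¹ * α⁻¹) c := by
  simp only [sm_eq_mapDomain, Finsupp.mapDomain_single]

theorem dp_zero_left (α β : H) (y : (H × H) →₀ K) : dp α β 0 y = 0 := by
  simp [dp]

theorem dp_zero_right (α β : H) (x : (H × H) →₀ K) : dp α β x 0 = 0 := by
  simp [dp]

theorem dp_add_left (α β : H) (x x' y : (H × H) →₀ K) :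
    dp α β (x + x') y = dp α β x y + dp α β x' y := by
  refine Finsupp.sum_add_index' (fun _ => by simp) fun _ c c' => ?_
  rw [← Finsupp.sum_add]
  congr 1
  funext qh d
  split_ifs <;> simp [add_mul]

theorem dp_add_right (α β : H) (x y y' : (H × H) →₀ K) :
    dp α β x (y + y') = dp α β x y + dp α β x y' := by
  rw [dp, dp, dp, ← Finsupp.sum_add]
  congr 1
  funext pg c
  apply Finsupp.sum_add_index' <;> intros <;> split_ifs <;> simp [mul_add]

theorem dp_single_single (α β p g q h : H) (c d : K) :
    dp α β (Finsupp.single (p, g) c) (Finsupp.single (q, h) d) =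
      if p = β * g * β⁻¹ * q * α * g⁻¹ * α⁻¹ then Finsupp.single (p, g * h) (c * d) else 0 := by
  rw [dp, Finsupp.sum_single_index (by simp), Finsupp.sum_single_index (by simp)]

theorem sm_dp_single_single (α β p g q h : H) (c d : K) :
    sm α β (dp α β (Finsupp.single (p, g) c) (Finsupp.single (q, h) d)) =
      dp α⁻¹ (α * β⁻¹ * α⁻¹) (sm α β (Finsupp.single (q, h) d))
        (sm α β (Finsupp.single (p, g) c)) := by
  rw [sm_single, sm_single, dp_single_single, dp_single_single]
  simp only [sm_condition_iff]
  split_ifs with hp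
  · subst hp
    rw [sm_single, mul_comm c d]
    congr 1
    ext <;> group
  · exact sm_zero α β

end

/-- `S_(α,β)` is an algebra anti-homomorphism from `K(H) ⋈ KH_(α,β)` to
`K(H) ⋈ KH_(α⁻¹, αβ⁻¹α⁻¹)`. -/
theorem stmt19 (K H : Type) [Field K] [Group H] [DecidableEq H] (α β : H) :
    ∀ x y : (H × H) →₀ K,
      sm α β (dp α β x y) = dp α⁻¹ (α * β⁻¹ * α⁻¹) (sm α β y) (sm α β x) := by
  intro x y
  induction x using Finsupp.induction_linear with
  | zero => rw [dp_zero_left, sm_zero, dp_zero_right]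
  | add x x' hx hx' => rw [dp_add_left, sm_add, sm_add, dp_add_right, hx, hx']
  | single pg c =>
    induction y using Finsupp.induction_linear with
    | zero => rw [dp_zero_right, sm_zero, dp_zero_left]
    | add y y' hy hy' => rw [dp_add_right, sm_add, sm_add, dp_add_left, hy, hy']
    | single qh d => exact sm_dp_single_single α β pg.1 pg.2 qh.1 qh.2 c d
end
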